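/- Let q ≥ 1 be an integer, τ = 1/q, and α ≤ β real numbers with β − α + 2τ < 2π. Let c_a (a ∈ ℤ) be the Fourier coefficients of h_{α,β,τ} regarded as a function on ℝ/2πℤ. Then Σ_{a=0}^{∞} |c_a| ≤ (1/π)·(9 + log q). -/

import Mathlib

open MeasureTheory

/-- The cubic `g(x) = -2x³ + 3x²`. -/
noncomputable def gcube (x : ℝ) : ℝ := -2 * x ^ 3 + 3 * x ^ 2

/-- The smoothed bump function `h_{α,β,τ}`. -/
noncomputable def hfun (α β τ : ℝ) (x : ℝ) : ℝ :=
  if x ≤ α - τ then 0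
  else if x ≤ α then gcube ((x - α + τ) / τ)
  else if x ≤ β then 1
  else if x ≤ β + τ then gcube ((β + τ - x) / τ)
  else 0

/-- The `2π`-periodization of `h_{α,β,τ}`, i.e. `h_{α,β,τ}` regarded as a function on
`ℝ/2πℤ`. -/
noncomputable def hper (α β τ : ℝ) (x : ℝ) : ℝ :=
  ∑' k : ℤ, hfun α β τ (x + 2 * Real.pi * k)

/-- The Fourier coefficients of `h_{α,β,τ}` regarded as a function on `ℝ/2πℤ`:
`c_a = (1/2π) ∫ over one period of the periodization of h(x) e^{-iax} dx`. -/
noncomputable def fourierC (α β τ : ℝ) (a : ℤ) : ℂ :=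
  (1 / (2 * Real.pi)) *
    ∫ x in (0 : ℝ)..(2 * Real.pi), (hper α β τ x : ℂ) * Complex.exp (-Complex.I * a * x)

/-!
Unfolding the periodization, `c_a` is `1/2π` times the integral of `h(x) e^{-iax}` over the
support `[α - τ, β + τ]`, so `|c_0| ≤ 1`. For `a ≠ 0` one integration by parts cancels the
boundary terms of the two ramps against those of the plateau and leaves the integrals of `h'`
over the ramps, each of `L¹`-norm `1`: `|c_a| ≤ 1/(πa)`. On each ramp `h'` vanishes at both
ends, so a second integration by parts, with `∫ |h''| = 3/τ` per ramp, gives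
`|c_a| ≤ 3/(πτa²)`. Using the first bound for `a ≤ q` and the second for `a > q`,
the sum is at most `1 + (H_q + 3)/π ≤ (9 + log q)/π`.
-/

section CharacterIntegrals

variable {a b : ℝ} {c : ℂ}

lemma norm_ofReal_mul_exp_of_re_eq_zero (hre : c.re = 0) (u x : ℝ) :
    ‖(u : ℂ) * Complex.exp (c * x)‖ = |u| := by
  simp [Complex.norm_exp, hre]

lemma norm_integral_ofReal_mul_exp_le (hab : a ≤ b) (hre : c.re = 0) (u : ℝ → ℝ) :
    ‖∫ x in a..b, (u x : ℂ) * Complex.exp (c * x)‖ ≤ ∫ x in a..b, |u x| := by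
  calc _ ≤ ∫ x in a..b, ‖(u x : ℂ) * Complex.exp (c * x)‖ :=
        intervalIntegral.norm_integral_le_integral_norm hab
    _ = ∫ x in a..b, |u x| := by simp_rw [norm_ofReal_mul_exp_of_re_eq_zero hre]

lemma integral_ofReal_mul_exp_eq (hc : c ≠ 0) {u u' : ℝ → ℝ}
    (hu : ∀ x ∈ Set.uIcc a b, HasDerivAt u (u' x) x) (hu' : IntervalIntegrable u' volume a b) :
    ∫ x in a..b, (u x : ℂ) * Complex.exp (c * x) =
      (u b * Complex.exp (c * b) - u a * Complex.exp (c * a)) / c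
        - (∫ x in a..b, (u' x : ℂ) * Complex.exp (c * x)) / c := by
  have hexp (x : ℝ) :
      HasDerivAt (fun y : ℝ => Complex.exp (c * y) / c) (Complex.exp (c * x)) x := by
    have := (((hasDerivAt_id (x : ℂ)).const_mul c).cexp.div_const c).comp_ofReal
    simpa [mul_div_cancel_right₀ _ hc] using this
  rw [intervalIntegral.integral_mul_deriv_eq_deriv_mul (fun x hx => (hu x hx).ofReal_comp)
    (fun x _ => hexp x) ⟨hu'.1.ofReal, hu'.2.ofReal⟩
    (Continuous.intervalIntegrable (by fun_prop) _ _)]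
  simp_rw [mul_div_assoc']
  rw [intervalIntegral.integral_div]
  ring

lemma integral_periodization_mul {f : ℝ → ℝ} {g : ℝ → ℂ} {T u v : ℝ} (hT : 0 < T)
    (huv : v - u ≤ T) (hf : Continuous f) (hg : Continuous g) (hgT : Function.Periodic g T)
    (hfu : ∀ x ≤ u, f x = 0) (hfv : ∀ x, v ≤ x → f x = 0) :
    ∫ x in (0 : ℝ)..T, ((∑' k : ℤ, f (x + T * k) : ℝ) : ℂ) * g x = ∫ x, (f x : ℂ) * g x := by
  set F : ℝ → ℂ := fun x => (f x : ℂ) * g x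
  have hF : Continuous F := by fun_prop
  obtain ⟨k, hku, hu⟩ : ∃ k : ℤ, T * k ≤ u ∧ u < T * k + T := by
    refine ⟨⌊u / T⌋, ?_, ?_⟩
    · rw [mul_comm, ← le_div_iff₀ hT]; exact Int.floor_le _
    · have := Int.lt_floor_add_one (u / T)
      rw [div_lt_iff₀ hT] at this; linarith
  -- on one period only the translates by `k` and `k + 1` meet the support of `f`
  have htwo : ∀ x ∈ Set.uIcc 0 T, ((∑' j : ℤ, f (x + T * j) : ℝ) : ℂ) * g x
      = F (x + T * k) + F (x + (T * k + T)) := by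
    intro x hx
    obtain ⟨hx0, hxT⟩ : 0 ≤ x ∧ x ≤ T := by rwa [Set.uIcc_of_le hT.le] at hx
    have hvan : ∀ j ∉ ({k, k + 1} : Finset ℤ), f (x + T * j) = 0 := by
      intro j hj
      simp only [Finset.mem_insert, Finset.mem_singleton, not_or] at hj
      rcases lt_or_gt_of_ne hj.1 with hjk | hjk
      · have : (j : ℝ) + 1 ≤ k := by exact_mod_cast hjk
        exact hfu _ (by nlinarith [mul_le_mul_of_nonneg_left this hT.le])
      · have : (k : ℝ) + 2 ≤ j := by exact_mod_cast (show k + 2 ≤ j by omega)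
        exact hfv _ (by nlinarith [mul_le_mul_of_nonneg_left this hT.le])
    have hg' (j : ℤ) : g (x + T * j) = g x := by rw [mul_comm]; exact hgT.int_mul j x
    rw [tsum_eq_sum hvan, Finset.sum_pair (by omega)]
    simp only [F]
    rw [show x + (T * k + T) = x + T * ((k + 1 : ℤ) : ℝ) by push_cast; ring, hg', hg']
    push_cast
    ring
  have hsupp : Function.support F ⊆ Set.Ioc (T * k) (T * k + T + T) := by
    intro x hx
    by_contra hx'
    rw [Set.mem_Ioc, not_and_or, not_lt, not_le] at hx'
    refine hx ?_
    rcases hx' with hx' | hx'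
    · simp [F, hfu x (by linarith)]
    · simp [F, hfv x (by linarith)]
  have hshift (d : ℝ) : IntervalIntegrable (fun x => F (x + d)) volume 0 T :=
    (hF.comp (continuous_add_const d)).intervalIntegrable _ _
  rw [intervalIntegral.integral_congr htwo, intervalIntegral.integral_add (hshift _) (hshift _),
    intervalIntegral.integral_comp_add_right F, intervalIntegral.integral_comp_add_right F,
    zero_add, zero_add, add_comm T (T * k), add_comm T (T * k + T),
    intervalIntegral.integral_add_adjacent_intervals
      (hF.intervalIntegrable _ _) (hF.intervalIntegrable _ _),
    intervalIntegral.integral_eq_integral_of_support_subset hsupp]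

end CharacterIntegrals

noncomputable def gcubeDeriv (t : ℝ) : ℝ := 6 * t - 6 * t ^ 2

section Profile

lemma gcube_zero : gcube 0 = 0 := by norm_num [gcube]

lemma gcube_one : gcube 1 = 1 := by norm_num [gcube]

lemma gcube_mem_Icc {t : ℝ} (ht : t ∈ Set.Icc (0 : ℝ) 1) : gcube t ∈ Set.Icc (0 : ℝ) 1 := by
  obtain ⟨h0, h1⟩ := ht
  constructor <;> unfold gcube <;> nlinarith [mul_nonneg h0 h0, mul_nonneg (sub_nonneg.2 h1) h0]

lemma gcubeDeriv_zero : gcubeDeriv 0 = 0 := by norm_num [gcubeDeriv]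

lemma gcubeDeriv_one : gcubeDeriv 1 = 0 := by norm_num [gcubeDeriv]

@[fun_prop]
lemma continuous_gcube : Continuous gcube := by unfold gcube; fun_prop

@[fun_prop]
lemma continuous_gcubeDeriv : Continuous gcubeDeriv := by unfold gcubeDeriv; fun_prop

lemma hasDerivAt_gcube (t : ℝ) : HasDerivAt gcube (gcubeDeriv t) t := by
  unfold gcube gcubeDeriv
  exact (((hasDerivAt_pow 3 t).const_mul (-2)).add
    ((hasDerivAt_pow 2 t).const_mul 3)).congr_deriv (by push_cast; ring)

lemma hasDerivAt_gcubeDeriv (t : ℝ) : HasDerivAt gcubeDeriv (6 - 12 * t) t := by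
  unfold gcubeDeriv
  exact (((hasDerivAt_id t).const_mul 6).sub
    ((hasDerivAt_pow 2 t).const_mul 6)).congr_deriv (by simp; ring)

lemma integral_abs_gcubeDeriv : ∫ t in (0 : ℝ)..1, |gcubeDeriv t| = 1 := by
  have hpos : ∀ t ∈ Set.uIcc (0 : ℝ) 1, |gcubeDeriv t| = gcubeDeriv t := by
    intro t ht
    rw [Set.uIcc_of_le zero_le_one] at ht
    exact abs_of_nonneg (by unfold gcubeDeriv; nlinarith [ht.1, ht.2])
  rw [intervalIntegral.integral_congr hpos, intervalIntegral.integral_eq_sub_of_hasDerivAt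
    (fun t _ => hasDerivAt_gcube t) (continuous_gcubeDeriv.intervalIntegrable _ _),
    gcube_one, gcube_zero, sub_zero]

lemma integral_abs_gcubeDeriv_deriv : ∫ t in (0 : ℝ)..1, |6 - 12 * t| = 3 := by
  have hcont : Continuous fun t : ℝ => |6 - 12 * t| := by fun_prop
  rw [← intervalIntegral.integral_add_adjacent_intervals (b := 1 / 2)
    (hcont.intervalIntegrable _ _) (hcont.intervalIntegrable _ _)]
  have h1 : ∀ t ∈ Set.uIcc (0 : ℝ) (1 / 2), |6 - 12 * t| = 6 - 12 * t := by
    intro t ht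
    rw [Set.uIcc_of_le (by norm_num)] at ht
    exact abs_of_nonneg (by linarith [ht.2])
  have h2 : ∀ t ∈ Set.uIcc (1 / 2 : ℝ) 1, |6 - 12 * t| = -(6 - 12 * t) := by
    intro t ht
    rw [Set.uIcc_of_le (by norm_num)] at ht
    exact abs_of_nonpos (by linarith [ht.1])
  have hint : Continuous fun t : ℝ => 6 - 12 * t := by fun_prop
  rw [intervalIntegral.integral_congr h1, intervalIntegral.integral_congr h2,
    intervalIntegral.integral_eq_sub_of_hasDerivAt (fun t _ => hasDerivAt_gcubeDeriv t)
      (hint.intervalIntegrable _ _),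
    intervalIntegral.integral_eq_sub_of_hasDerivAt (fun t _ => (hasDerivAt_gcubeDeriv t).neg)
      (hint.neg.intervalIntegrable _ _)]
  norm_num [gcubeDeriv]

end Profile

section AffineRamp

variable {κ d a b : ℝ} {c : ℂ}

lemma integral_comp_mul_add_of_endpoints (φ : ℝ → ℝ) (hab : a ≤ b)
    (hends : κ * a + d = 0 ∧ κ * b + d = 1 ∨ κ * a + d = 1 ∧ κ * b + d = 0) :
    ∫ x in a..b, φ (κ * x + d) = |κ|⁻¹ * ∫ t in (0 : ℝ)..1, φ t := by
  have hκ : κ ≠ 0 := by rintro rfl; rcases hends with ⟨h0, h1⟩ | ⟨h0, h1⟩ <;> simp_all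
  rw [intervalIntegral.integral_comp_mul_add _ hκ, smul_eq_mul]
  rcases hends with ⟨h0, h1⟩ | ⟨h1, h0⟩
  · rw [h0, h1, abs_of_pos (by nlinarith)]
  · rw [h0, h1, abs_of_neg (by nlinarith), intervalIntegral.integral_symm, inv_neg, neg_mul,
      mul_neg]

lemma hasDerivAt_gcube_comp_mul_add (x : ℝ) :
    HasDerivAt (fun x => gcube (κ * x + d)) (κ * gcubeDeriv (κ * x + d)) x :=
  ((hasDerivAt_gcube _).comp x (((hasDerivAt_id x).const_mul κ).add_const d)).congr_deriv
    (by simp [mul_comm])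

lemma hasDerivAt_gcubeDeriv_comp_mul_add (x : ℝ) :
    HasDerivAt (fun x => κ * gcubeDeriv (κ * x + d)) (κ ^ 2 * (6 - 12 * (κ * x + d))) x :=
  (((hasDerivAt_gcubeDeriv _).comp x
    (((hasDerivAt_id x).const_mul κ).add_const d)).const_mul κ).congr_deriv (by simp; ring)

lemma exists_integral_gcube_comp_mul_exp_eq (hab : a ≤ b)
    (hends : κ * a + d = 0 ∧ κ * b + d = 1 ∨ κ * a + d = 1 ∧ κ * b + d = 0)
    (hc : c ≠ 0) (hre : c.re = 0) :
    ∃ D : ℂ, ∫ x in a..b, (gcube (κ * x + d) : ℂ) * Complex.exp (c * x) =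
        (gcube (κ * b + d) * Complex.exp (c * b) - gcube (κ * a + d) * Complex.exp (c * a)) / c
          - D / c ∧ ‖D‖ ≤ 1 ∧ ‖D‖ ≤ 3 * |κ| / ‖c‖ := by
  have hκ : κ ≠ 0 := by rintro rfl; rcases hends with ⟨h0, h1⟩ | ⟨h0, h1⟩ <;> simp_all
  refine ⟨_, integral_ofReal_mul_exp_eq hc (fun x _ => hasDerivAt_gcube_comp_mul_add x)
    (Continuous.intervalIntegrable (by fun_prop) _ _), ?_, ?_⟩
  · calc _ ≤ ∫ x in a..b, |κ * gcubeDeriv (κ * x + d)| :=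
          norm_integral_ofReal_mul_exp_le hab hre _
      _ = |κ| * (|κ|⁻¹ * 1) := by
        simp_rw [abs_mul]
        rw [intervalIntegral.integral_const_mul,
          integral_comp_mul_add_of_endpoints (fun t => |gcubeDeriv t|) hab hends,
          integral_abs_gcubeDeriv]
      _ = 1 := by field_simp
  · have hvan : κ * gcubeDeriv (κ * a + d) = 0 ∧ κ * gcubeDeriv (κ * b + d) = 0 := by
      rcases hends with ⟨h0, h1⟩ | ⟨h0, h1⟩ <;> simp [h0, h1, gcubeDeriv_zero, gcubeDeriv_one]
    rw [integral_ofReal_mul_exp_eq hc (fun x _ => hasDerivAt_gcubeDeriv_comp_mul_add x)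
      (Continuous.intervalIntegrable (by fun_prop) _ _), hvan.1, hvan.2]
    have hbound := norm_integral_ofReal_mul_exp_le hab hre
      (fun x => κ ^ 2 * (6 - 12 * (κ * x + d)))
    simp_rw [abs_mul, abs_pow, sq_abs] at hbound
    rw [intervalIntegral.integral_const_mul,
      integral_comp_mul_add_of_endpoints (fun t => |6 - 12 * t|) hab hends,
      integral_abs_gcubeDeriv_deriv] at hbound
    simp only [Complex.ofReal_zero, zero_mul, sub_zero, zero_div, zero_sub, norm_neg, norm_div]
    rw [div_le_div_iff_of_pos_right (norm_pos_iff.2 hc)]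
    refine hbound.trans (le_of_eq ?_)
    rw [← sq_abs κ]
    field_simp

end AffineRamp

section Bump

variable {α β τ x : ℝ}

lemma hfun_eq_zero_of_le (h : x ≤ α - τ) : hfun α β τ x = 0 := if_pos h

lemma hfun_eq_rise (h₁ : α - τ ≤ x) (h₂ : x ≤ α) :
    hfun α β τ x = gcube ((x - α + τ) / τ) := by
  rcases h₁.eq_or_lt with rfl | h₁
  · simp [hfun, gcube_zero]
  · rw [hfun, if_neg h₁.not_ge, if_pos h₂]

lemma hfun_eq_one (hτ : 0 < τ) (h₁ : α ≤ x) (h₂ : x ≤ β) : hfun α β τ x = 1 := by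
  rcases h₁.eq_or_lt with rfl | h₁
  · rw [hfun_eq_rise (by linarith) le_rfl, sub_self, zero_add, div_self hτ.ne', gcube_one]
  · rw [hfun, if_neg (by linarith), if_neg h₁.not_ge, if_pos h₂]

lemma hfun_eq_fall (hτ : 0 < τ) (hab : α ≤ β) (h₁ : β ≤ x) (h₂ : x ≤ β + τ) :
    hfun α β τ x = gcube ((β + τ - x) / τ) := by
  rcases h₁.eq_or_lt with rfl | h₁
  · rw [hfun_eq_one hτ hab le_rfl, add_sub_cancel_left, div_self hτ.ne', gcube_one]
  · rw [hfun, if_neg (by linarith), if_neg (by linarith), if_neg h₁.not_ge, if_pos h₂]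

lemma hfun_eq_zero_of_ge (hτ : 0 < τ) (hab : α ≤ β) (h : β + τ ≤ x) : hfun α β τ x = 0 := by
  rcases h.eq_or_lt with rfl | h
  · rw [hfun_eq_fall hτ hab (by linarith) le_rfl, sub_self, zero_div, gcube_zero]
  · rw [hfun, if_neg (by linarith), if_neg (by linarith), if_neg (by linarith), if_neg h.not_ge]

lemma hfun_mem_Icc (hτ : 0 < τ) : hfun α β τ x ∈ Set.Icc (0 : ℝ) 1 := by
  unfold hfun
  split_ifs with h₁ h₂ h₃ h₄ <;> try simp
  all_goals exact gcube_mem_Icc ⟨div_nonneg (by linarith) hτ.le, (div_le_one hτ).2 (by linarith)⟩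

lemma continuous_hfun (hτ : 0 < τ) (hab : α ≤ β) : Continuous (hfun α β τ) := by
  unfold hfun
  refine continuous_const.if_le ?_ continuous_id continuous_const ?_
  · refine Continuous.if_le (by fun_prop) ?_ continuous_id continuous_const ?_
    · refine continuous_const.if_le ?_ continuous_id continuous_const ?_
      · exact Continuous.if_le (by fun_prop) continuous_const continuous_id continuous_const
          (by rintro x rfl; simp [gcube_zero])
      · rintro x rfl
        simp [hτ.le, hτ.ne', gcube_one]
    · rintro x rfl
      simp [hab, hτ.ne', gcube_one]
  · rintro x rfl
    simp [hτ.le, gcube_zero]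

end Bump

section Coefficients

variable {α β τ : ℝ}

lemma exists_integral_hfun_mul_exp_eq (hτ : 0 < τ) (hab : α ≤ β) {c : ℂ} (hc : c ≠ 0)
    (hre : c.re = 0) :
    ∃ D₁ D₂ : ℂ, ∫ x in (α - τ)..(β + τ), (hfun α β τ x : ℂ) * Complex.exp (c * x) =
        -(D₁ + D₂) / c ∧ ‖D₁‖ ≤ 1 ∧ ‖D₁‖ ≤ 3 / (τ * ‖c‖) ∧
          ‖D₂‖ ≤ 1 ∧ ‖D₂‖ ≤ 3 / (τ * ‖c‖) := by
  have hF : Continuous fun x => (hfun α β τ x : ℂ) * Complex.exp (c * x) := by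
    have := continuous_hfun hτ hab; fun_prop
  obtain ⟨D₁, hrise, hD₁, hD₁'⟩ := exists_integral_gcube_comp_mul_exp_eq (κ := τ⁻¹)
    (d := 1 - α / τ) (a := α - τ) (b := α) (by linarith)
    (Or.inl ⟨by field_simp; ring, by field_simp; ring⟩) hc hre
  obtain ⟨D₂, hfall, hD₂, hD₂'⟩ := exists_integral_gcube_comp_mul_exp_eq (κ := -τ⁻¹)
    (d := 1 + β / τ) (a := β) (b := β + τ) (by linarith)
    (Or.inr ⟨by field_simp; ring, by field_simp; ring⟩) hc hre
  have hκ : |τ⁻¹| = τ⁻¹ := abs_of_pos (inv_pos.2 hτ)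
  refine ⟨D₁, D₂, ?_, hD₁, hD₁'.trans_eq ?_, hD₂, hD₂'.trans_eq ?_⟩
  · have hrise' : ∫ x in (α - τ)..α, (hfun α β τ x : ℂ) * Complex.exp (c * x) =
        ∫ x in (α - τ)..α, (gcube (τ⁻¹ * x + (1 - α / τ)) : ℂ) * Complex.exp (c * x) := by
      refine intervalIntegral.integral_congr fun x hx => ?_
      rw [Set.uIcc_of_le (by linarith)] at hx
      rw [hfun_eq_rise hx.1 hx.2, show (x - α + τ) / τ = τ⁻¹ * x + (1 - α / τ) by
        field_simp; ring]
    have hmid : ∫ x in α..β, (hfun α β τ x : ℂ) * Complex.exp (c * x) =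
        (Complex.exp (c * β) - Complex.exp (c * α)) / c := by
      rw [← integral_exp_mul_complex hc]
      refine intervalIntegral.integral_congr fun x hx => ?_
      rw [Set.uIcc_of_le hab] at hx
      simp [hfun_eq_one hτ hx.1 hx.2]
    have hfall' : ∫ x in β..(β + τ), (hfun α β τ x : ℂ) * Complex.exp (c * x) =
        ∫ x in β..(β + τ), (gcube (-τ⁻¹ * x + (1 + β / τ)) : ℂ) * Complex.exp (c * x) := by
      refine intervalIntegral.integral_congr fun x hx => ?_
      rw [Set.uIcc_of_le (by linarith)] at hx
      rw [hfun_eq_fall hτ hab hx.1 hx.2, show (β + τ - x) / τ = -τ⁻¹ * x + (1 + β / τ) by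
        field_simp; ring]
    rw [← intervalIntegral.integral_add_adjacent_intervals (b := β)
      (hF.intervalIntegrable _ _) (hF.intervalIntegrable _ _),
      ← intervalIntegral.integral_add_adjacent_intervals (b := α)
      (hF.intervalIntegrable _ _) (hF.intervalIntegrable _ _),
      hrise', hmid, hfall', hrise, hfall,
      show τ⁻¹ * α + (1 - α / τ) = 1 by field_simp; ring,
      show τ⁻¹ * (α - τ) + (1 - α / τ) = 0 by field_simp; ring,
      show -τ⁻¹ * (β + τ) + (1 + β / τ) = 0 by field_simp; ring,
      show -τ⁻¹ * β + (1 + β / τ) = 1 by field_simp; ring, gcube_zero, gcube_one]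
    push_cast
    ring
  · rw [hκ]; field_simp
  · rw [abs_neg, hκ]; field_simp

lemma norm_integral_hfun_mul_exp_le (hτ : 0 < τ) (hab : α ≤ β) {c : ℂ} (hc : c ≠ 0)
    (hre : c.re = 0) :
    ‖∫ x in (α - τ)..(β + τ), (hfun α β τ x : ℂ) * Complex.exp (c * x)‖ ≤ 2 / ‖c‖ ∧
      ‖∫ x in (α - τ)..(β + τ), (hfun α β τ x : ℂ) * Complex.exp (c * x)‖ ≤
        6 / (τ * ‖c‖ ^ 2) := by
  obtain ⟨D₁, D₂, hF, hD₁, hD₁', hD₂, hD₂'⟩ := exists_integral_hfun_mul_exp_eq hτ hab hc hre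
  have hnorm : ‖-(D₁ + D₂) / c‖ ≤ (‖D₁‖ + ‖D₂‖) / ‖c‖ := by
    rw [norm_div, norm_neg]
    gcongr
    exact norm_add_le _ _
  rw [hF]
  constructor
  · calc _ ≤ (‖D₁‖ + ‖D₂‖) / ‖c‖ := hnorm
      _ ≤ (1 + 1) / ‖c‖ := by gcongr
      _ = 2 / ‖c‖ := by norm_num
  · calc _ ≤ (‖D₁‖ + ‖D₂‖) / ‖c‖ := hnorm
      _ ≤ (3 / (τ * ‖c‖) + 3 / (τ * ‖c‖)) / ‖c‖ := by gcongr
      _ = 6 / (τ * ‖c‖ ^ 2) := by field_simp; ring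

lemma norm_one_div_two_pi : ‖(1 : ℂ) / (2 * Real.pi)‖ = 1 / (2 * Real.pi) := by
  simp [abs_of_pos Real.pi_pos]

lemma fourierC_eq_integral (hτ : 0 < τ) (hab : α ≤ β) (hlen : β - α + 2 * τ < 2 * Real.pi)
    (a : ℤ) : fourierC α β τ a = 1 / (2 * Real.pi) *
      ∫ x in (α - τ)..(β + τ), (hfun α β τ x : ℂ) * Complex.exp (-Complex.I * a * x) := by
  have hperiodic : Function.Periodic (fun x : ℝ => Complex.exp (-Complex.I * a * x))
      (2 * Real.pi) := by
    intro x
    simp only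
    rw [show -Complex.I * a * ((x + 2 * Real.pi : ℝ) : ℂ) =
      -Complex.I * a * x + (-a : ℤ) * (2 * Real.pi * Complex.I) by push_cast; ring,
      Complex.exp_add, Complex.exp_int_mul_two_pi_mul_I, mul_one]
  have hsupp : Function.support (fun x => (hfun α β τ x : ℂ) * Complex.exp (-Complex.I * a * x))
      ⊆ Set.Ioc (α - τ) (β + τ) := by
    intro x hx
    by_contra hx'
    rw [Set.mem_Ioc, not_and_or, not_lt, not_le] at hx'
    refine hx ?_
    rcases hx' with hx' | hx'
    · simp [hfun_eq_zero_of_le hx']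
    · simp [hfun_eq_zero_of_ge hτ hab hx'.le]
  rw [fourierC, intervalIntegral.integral_eq_integral_of_support_subset hsupp]
  unfold hper
  rw [integral_periodization_mul Real.two_pi_pos (by linarith) (continuous_hfun hτ hab)
    (by fun_prop) hperiodic (fun x hx => hfun_eq_zero_of_le hx)
    (fun x hx => hfun_eq_zero_of_ge hτ hab hx)]

lemma norm_fourierC_le_one (hτ : 0 < τ) (hab : α ≤ β) (hlen : β - α + 2 * τ < 2 * Real.pi)
    (a : ℤ) : ‖fourierC α β τ a‖ ≤ 1 := by
  have hint : ‖∫ x in (α - τ)..(β + τ), (hfun α β τ x : ℂ) * Complex.exp (-Complex.I * a * x)‖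
      ≤ 1 * |β + τ - (α - τ)| := by
    refine intervalIntegral.norm_integral_le_of_norm_le_const fun x _ => ?_
    have h := hfun_mem_Icc (α := α) (β := β) (x := x) hτ
    rw [norm_ofReal_mul_exp_of_re_eq_zero (by simp), abs_of_nonneg h.1]
    exact h.2
  rw [one_mul, abs_of_nonneg (by linarith)] at hint
  rw [fourierC_eq_integral hτ hab hlen, norm_mul, norm_one_div_two_pi, div_mul_eq_mul_div, one_mul,
    div_le_one Real.two_pi_pos]
  linarith

lemma norm_fourierC_le (hτ : 0 < τ) (hab : α ≤ β) (hlen : β - α + 2 * τ < 2 * Real.pi)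
    {n : ℕ} (hn : n ≠ 0) :
    ‖fourierC α β τ n‖ ≤ 1 / (Real.pi * n) ∧ ‖fourierC α β τ n‖ ≤ 3 / (Real.pi * τ * n ^ 2) := by
  have hc : -Complex.I * (n : ℤ) ≠ 0 := by simp [hn]
  have hnorm : ‖-Complex.I * (n : ℤ)‖ = n := by simp
  obtain ⟨h₁, h₂⟩ := norm_integral_hfun_mul_exp_le hτ hab hc (by simp)
  rw [hnorm] at h₁ h₂
  rw [fourierC_eq_integral hτ hab hlen, norm_mul, norm_one_div_two_pi]
  constructor
  · calc _ ≤ 1 / (2 * Real.pi) * (2 / n) := by gcongr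
      _ = 1 / (Real.pi * n) := by field_simp
  · calc _ ≤ 1 / (2 * Real.pi) * (6 / (τ * n ^ 2)) := by gcongr
      _ = 3 / (Real.pi * τ * n ^ 2) := by field_simp; ring

end Coefficients

lemma tsum_le_of_le_div_of_le_div_sq {f : ℕ → ℝ} {q : ℕ} {A B : ℝ} (hq : q ≠ 0) (hB : 0 ≤ B)
    (hf : ∀ n, 0 ≤ f n) (hsmall : ∀ n, n ≠ 0 → n ≤ q → f n ≤ A / n)
    (hlarge : ∀ n, q < n → f n ≤ B / n ^ 2) :
    ∑' n, f n ≤ f 0 + A * harmonic q + B / q := by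
  refine Real.tsum_le_of_sum_range_le hf fun N => ?_
  have hsplit : ∑ n ∈ Finset.range (N + q + 1), f n =
      f 0 + ∑ n ∈ Finset.Ioc 0 q, f n + ∑ n ∈ Finset.Ioc q (N + q), f n := by
    rw [Nat.range_succ_eq_Icc_zero, Finset.Icc_eq_cons_Ioc (Nat.zero_le _),
      Finset.sum_cons, add_assoc, Finset.sum_Ioc_consecutive _ (Nat.zero_le q) (by omega)]
  have hharm : ∑ n ∈ Finset.Ioc 0 q, A / (n : ℝ) = A * harmonic q := by
    rw [harmonic_eq_sum_Icc, ← Finset.Icc_add_one_left_eq_Ioc]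
    push_cast
    rw [Finset.mul_sum]
    rfl
  have htail := sum_Ioc_inv_sq_le_sub (α := ℝ) hq (by omega : q ≤ N + q)
  calc ∑ n ∈ Finset.range N, f n ≤ ∑ n ∈ Finset.range (N + q + 1), f n :=
        Finset.sum_le_sum_of_subset_of_nonneg (Finset.range_subset_range.2 (by omega))
          fun n _ _ => hf n
    _ ≤ f 0 + ∑ n ∈ Finset.Ioc 0 q, A / (n : ℝ)
          + ∑ n ∈ Finset.Ioc q (N + q), B * ((n : ℝ) ^ 2)⁻¹ := by
        rw [hsplit]
        gcongr with n hn n hn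
        · simp only [Finset.mem_Ioc] at hn
          exact hsmall n (by omega) hn.2
        · simp only [Finset.mem_Ioc] at hn
          exact (hlarge n hn.1).trans_eq (div_eq_mul_inv _ _)
    _ ≤ f 0 + A * harmonic q + B * ((q : ℝ)⁻¹ - ((N + q : ℕ) : ℝ)⁻¹) := by
        rw [hharm, ← Finset.mul_sum]
        gcongr
    _ ≤ f 0 + A * harmonic q + B / q := by
        rw [div_eq_mul_inv]
        gcongr
        exact sub_le_self _ (by positivity)

/-- With `τ = 1/q` for an integer `q ≥ 1`, the nonnegative Fourier coefficients of
`h_{α,β,τ}` satisfy `∑_{a=0}^∞ |c_a| ≤ (1/π)(9 + log q)`. -/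
theorem fourier_coeff_sum_bound (q : ℕ) (hq : 1 ≤ q) (τ : ℝ) (hτ : τ = 1 / (q : ℝ))
    (α β : ℝ) (hab : α ≤ β) (hlen : β - α + 2 * τ < 2 * Real.pi) :
    ∑' a : ℕ, ‖fourierC α β τ (a : ℤ)‖ ≤
      (1 / Real.pi) * (9 + Real.log (q : ℝ)) := by
  have hτ₀ : 0 < τ := by rw [hτ]; positivity
  have hπ := Real.pi_pos
  have hsum := tsum_le_of_le_div_of_le_div_sq (f := fun n : ℕ => ‖fourierC α β τ n‖) (q := q)
    (A := 1 / Real.pi) (B := 3 * q / Real.pi) (by omega) (by positivity) (fun _ => norm_nonneg _)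
    (fun n hn _ => (norm_fourierC_le hτ₀ hab hlen hn).1.trans_eq (by field_simp))
    (fun n hn => (norm_fourierC_le hτ₀ hab hlen (by omega)).2.trans_eq
      (by rw [hτ]; field_simp))
  calc _ ≤ ‖fourierC α β τ 0‖ + 1 / Real.pi * harmonic q + 3 * q / Real.pi / q := hsum
    _ ≤ 1 + 1 / Real.pi * (1 + Real.log q) + 3 / Real.pi := by
        rw [show (3 * q / Real.pi / q : ℝ) = 3 / Real.pi by field_simp]
        gcongr
        · exact norm_fourierC_le_one hτ₀ hab hlen 0
        · exact harmonic_le_one_add_log q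
    _ ≤ 1 / Real.pi * (9 + Real.log q) := by
        rw [← sub_nonneg, show 1 / Real.pi * (9 + Real.log q) -
          (1 + 1 / Real.pi * (1 + Real.log q) + 3 / Real.pi) = (5 - Real.pi) / Real.pi by
            field_simp; ring]
        exact div_nonneg (by linarith [Real.pi_le_four]) hπ.le
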